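/- Let A and B be c.e. subsets of ℕ with B ⊂ₛ A and B ⊂ₘ A. Then for every non-computable split X ⊑ A, the set X ∖ B is not c.e. -/

import Mathlib

/-- A set of natural numbers is computably enumerable if it is the domain of a
partial computable function. -/
def CE (A : Set ℕ) : Prop := ∃ f : ℕ →. ℕ, Partrec f ∧ A = f.Dom

/-- A set of natural numbers is computable if its membership predicate is computable. -/
def IsComputableSet (A : Set ℕ) : Prop := ComputablePred (· ∈ A)

/-- `X ⊆* Y` : `X ∖ Y` is finite. -/
def SubsetStar (X Y : Set ℕ) : Prop := (X \ Y).Finite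

/-- `X ⊑ A` : `X` is a split of the c.e. set `A`, i.e. `X` is c.e. and there is a
c.e. set `Y` with `X ∩ Y = ∅` and `X ∪ Y = A`. -/
def Split (A X : Set ℕ) : Prop := CE X ∧ ∃ Y : Set ℕ, CE Y ∧ X ∩ Y = ∅ ∧ X ∪ Y = A

/-- `B ⊂ₛ A` : `B` is a small subset of `A`. -/
def SmallSubset (B A : Set ℕ) : Prop :=
  B ⊆ A ∧ ∀ U V : Set ℕ, CE U → CE V → SubsetStar (U ∩ (A \ B)) V → CE ((U \ A) ∪ V)

/-- `B ⊂ₘ A` : `B` is a major subset of `A`. -/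
def MajorSubset (B A : Set ℕ) : Prop :=
  B ⊆ A ∧ (A \ B).Infinite ∧
    ∀ W : Set ℕ, CE W → A ∪ W = Set.univ → (Set.univ \ (B ∪ W)).Finite

/-
Let `X ∪ Y = A` be the split. If `X ∖ B` is finite, then `Y ∪ (X ∖ B)` is a c.e. set covering
`A ∖ B`, so smallness makes `(ℕ ∖ A) ∪ Y ∪ (X ∖ B)` c.e.; removing the finite set `X ∖ B` leaves
the complement of `X`, hence `X` is computable. If `X ∖ B` is infinite and c.e., it contains an
infinite computable set `R`; then `W = ℕ ∖ R` satisfies `A ∪ W = ℕ`, while `ℕ ∖ (B ∪ W) = R` is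
infinite, contradicting majorness.
-/

open Nat.Partrec.Code

theorem ce_iff_rePred {A : Set ℕ} : CE A ↔ REPred (· ∈ A) := by
  constructor
  · rintro ⟨f, hf, rfl⟩
    exact hf.dom_re.of_eq fun _ => Iff.rfl
  · intro h
    refine ⟨fun n => (Part.assert (n ∈ A) fun _ => Part.some ()).map fun _ => 0,
      h.map (Computable.const 0).to₂, ?_⟩
    ext n
    simp [PFun.Dom, Part.assert]

theorem CE.univ : CE (Set.univ : Set ℕ) :=
  ⟨Part.some, Partrec.some, by ext n; simp [PFun.Dom]⟩

theorem CE.union {P Q : Set ℕ} (hP : CE P) (hQ : CE Q) : CE (P ∪ Q) := by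
  obtain ⟨f, hf, rfl⟩ := hP
  obtain ⟨g, hg, rfl⟩ := hQ
  obtain ⟨k, hk, H⟩ := Partrec.merge' hf hg
  exact ⟨k, hk, by ext n; exact (H n).2.symm⟩

theorem CE.diff {P F : Set ℕ} (hP : CE P) (hF : IsComputableSet F) : CE (P \ F) := by
  rw [ce_iff_rePred] at hP ⊢
  have hnF : REPred fun n => n ∉ F := hF.not.to_re
  exact (hnF.bind (hP.comp Computable.fst).to₂).of_eq fun n =>
    Part.ext' (by simp [Part.assert, and_comm]) fun _ _ => rfl

theorem IsComputableSet.ce {F : Set ℕ} (hF : IsComputableSet F) : CE F :=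
  ce_iff_rePred.2 hF.to_re

theorem isComputableSet_iff_ce_and_ce_compl {X : Set ℕ} :
    IsComputableSet X ↔ CE X ∧ CE Xᶜ := by
  rw [IsComputableSet, ComputablePred.computable_iff_re_compl_re', ce_iff_rePred, ce_iff_rePred]
  rfl

theorem Set.Finite.isComputableSet {F : Set ℕ} (hF : F.Finite) : IsComputableSet F := by
  obtain ⟨s, rfl⟩ := hF.exists_finset_coe
  have h : PrimrecPred fun x : ℕ => ∃ a ∈ s.toList, a = x :=
    (PrimrecRel.exists_mem_list Primrec.eq).comp (Primrec.const _) Primrec.id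
  exact h.computablePred.of_eq fun x => by simp

theorem Nat.Partrec.Code.eval_dom_iff_exists_evaln_isSome {c : Code} {n : ℕ} :
    (eval c n).Dom ↔ ∃ k, (evaln k c n).isSome := by
  rw [Part.dom_iff_mem]
  constructor
  · rintro ⟨x, hx⟩
    obtain ⟨k, hk⟩ := evaln_complete.1 hx
    exact ⟨k, Option.isSome_iff_exists.2 ⟨x, hk⟩⟩
  · rintro ⟨k, hk⟩
    obtain ⟨x, hx⟩ := Option.isSome_iff_exists.1 hk
    exact ⟨x, evaln_sound hx⟩

/-- Dovetailing: `Nat.pair k n` is sent to `n` if the computation on input `n` halts within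
`k` steps, and to a fixed element of `D` otherwise. -/
theorem CE.exists_computable_range_eq {D : Set ℕ} (hD : CE D) (hne : D.Nonempty) :
    ∃ g : ℕ → ℕ, Computable g ∧ Set.range g = D := by
  obtain ⟨f, hf, rfl⟩ := hD
  obtain ⟨c, hc⟩ := exists_code.1 (Partrec.nat_iff.1 hf)
  have hdom : ∀ n, n ∈ f.Dom ↔ ∃ k, (evaln k c n).isSome := fun n => by
    rw [← eval_dom_iff_exists_evaln_isSome, hc]; rfl
  obtain ⟨d₀, hd₀⟩ := hne
  refine ⟨fun m => bif (evaln m.unpair.1 c m.unpair.2).isSome then m.unpair.2 else d₀, ?_, ?_⟩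
  · have hstep : Primrec fun m : ℕ => evaln m.unpair.1 c m.unpair.2 :=
      primrec_evaln.comp (((Primrec.fst.comp Primrec.unpair).pair (Primrec.const c)).pair
        (Primrec.snd.comp Primrec.unpair))
    exact (Primrec.cond (Primrec.option_isSome.comp hstep) (Primrec.snd.comp Primrec.unpair)
      (Primrec.const d₀)).to_comp
  · ext n
    constructor
    · rintro ⟨m, rfl⟩
      cases hs : (evaln m.unpair.1 c m.unpair.2).isSome
      · simpa [hs] using hd₀
      · simpa [hs] using (hdom _).2 ⟨_, hs⟩
    · intro hn
      obtain ⟨k, hk⟩ := (hdom n).1 hn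
      exact ⟨Nat.pair k n, by simp [hk]⟩

/-- The witness is the set of record values of an enumeration `g` of `D` (values exceeding all
earlier ones): `n` is a record iff `g` takes the value `n` at the first stage where it reaches `n`. -/
theorem CE.exists_infinite_isComputableSet_subset {D : Set ℕ} (hD : CE D) (hinf : D.Infinite) :
    ∃ R ⊆ D, R.Infinite ∧ IsComputableSet R := by
  classical
  obtain ⟨g, hg, rfl⟩ := hD.exists_computable_range_eq hinf.nonempty
  have hreach : ∀ n, ∃ k, n ≤ g k := fun n => by
    by_contra! h
    exact hinf ((Set.finite_Iio n).subset (Set.range_subset_iff.2 h))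
  let first : ℕ → ℕ := fun n => Nat.find (hreach n)
  have hfirst : Computable first :=
    Computable.find ((Primrec.nat_le.decide.to_comp.comp Computable.fst
      (hg.comp Computable.snd)).computablePred) hreach
  have hrecord : ∀ n, g (first (g (first n))) = g (first n) := fun n => by
    congr 1
    exact le_antisymm (Nat.find_min' _ le_rfl)
      (Nat.find_mono fun k hk => (Nat.find_spec (hreach n)).trans hk)
  refine ⟨{n | g (first n) = n}, fun n hn => ⟨first n, hn⟩, ?_, ?_⟩
  · exact Set.infinite_of_forall_exists_gt fun n =>
      ⟨g (first (n + 1)), hrecord (n + 1), Nat.find_spec (hreach (n + 1))⟩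
  · exact (Primrec.eq.decide.to_comp.comp (hg.comp hfirst) Computable.id).computablePred

theorem Split.subset {A X : Set ℕ} (hX : Split A X) : X ⊆ A := by
  obtain ⟨-, Y, -, -, rfl⟩ := hX
  exact Set.subset_union_left

theorem SmallSubset.isComputableSet_of_split_of_finite_diff {A B X : Set ℕ}
    (hsmall : SmallSubset B A) (hX : Split A X) (hfin : (X \ B).Finite) : IsComputableSet X := by
  obtain ⟨hXce, Y, hYce, hdisj, rfl⟩ := hX
  have hcover : SubsetStar (Set.univ ∩ ((X ∪ Y) \ B)) (Y ∪ (X \ B)) := by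
    refine Set.finite_empty.subset ?_
    rintro a ⟨⟨-, ha, haB⟩, hnot⟩
    rcases ha with haX | haY
    · exact hnot (Or.inr ⟨haX, haB⟩)
    · exact hnot (Or.inl haY)
  have hce : CE ((Set.univ \ (X ∪ Y)) ∪ (Y ∪ (X \ B))) :=
    hsmall.2 _ _ CE.univ (hYce.union hfin.isComputableSet.ce) hcover
  have hcompl : Xᶜ = ((Set.univ \ (X ∪ Y)) ∪ (Y ∪ (X \ B))) \ (X \ B) := by
    ext a
    have : a ∉ X ∩ Y := hdisj ▸ Set.notMem_empty a
    simp only [Set.mem_compl_iff, Set.mem_sdiff, Set.mem_union, Set.mem_univ, true_and,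
      Set.mem_inter_iff] at this ⊢
    tauto
  refine isComputableSet_iff_ce_and_ce_compl.2 ⟨hXce, ?_⟩
  rw [hcompl]
  exact hce.diff hfin.isComputableSet

theorem MajorSubset.not_ce_of_infinite_subset_diff {A B D : Set ℕ} (hmajor : MajorSubset B A)
    (hD : D ⊆ A \ B) (hinf : D.Infinite) : ¬ CE D := by
  intro hDce
  obtain ⟨R, hRD, hRinf, hR⟩ := hDce.exists_infinite_isComputableSet_subset hinf
  have hcover : A ∪ Rᶜ = Set.univ :=
    Set.eq_univ_of_forall fun x => (em (x ∈ R)).imp (fun hx => (hD (hRD hx)).1) id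
  have hfin := hmajor.2.2 _ (isComputableSet_iff_ce_and_ce_compl.1 hR).2 hcover
  refine hRinf (hfin.subset fun r hr => ⟨trivial, ?_⟩)
  rintro (hrB | hrR)
  · exact (hD (hRD hr)).2 hrB
  · exact hrR hr

theorem stmt7_general (A B : Set ℕ)
    (hsmall : SmallSubset B A) (hmajor : MajorSubset B A) :
    ∀ X : Set ℕ, Split A X → ¬ IsComputableSet X → ¬ CE (X \ B) := by
  intro X hX hXnc
  by_cases hfin : (X \ B).Finite
  · exact absurd (hsmall.isComputableSet_of_split_of_finite_diff hX hfin) hXnc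
  · exact hmajor.not_ce_of_infinite_subset_diff (Set.sdiff_subset_sdiff_left hX.subset) hfin

/-- If `A`, `B` are c.e. with `B ⊂ₛ A` and `B ⊂ₘ A`, then for every
non-computable split `X ⊑ A`, the set `X ∖ B` is not c.e. -/
theorem stmt7 (A B : Set ℕ) (hA : CE A) (hB : CE B)
    (hsmall : SmallSubset B A) (hmajor : MajorSubset B A) :
    ∀ X : Set ℕ, Split A X → ¬ IsComputableSet X → ¬ CE (X \ B) :=
  stmt7_general A B hsmall hmajor
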